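/- arXiv:2012.06101 — 8 statements merged into one kernel-verified Lean document; each statement's English description precedes it below -/
import Mathlib

section
/- Let G be a finite simple graph that is primarily orientable (i.e., G admits a prime orientation). Then for every stable module S of G, 2^(d_G(S)) ≥ |S| (equivalently, d_G(S) ≥ log₂|S|). Concretely, if →G is a prime orientation of G, the map sending each x ∈ S to its out-neighbourhood in →G is an injective map from S into the power set of N_G(S). -/
variable {V : Type*}

/-- `M` is a module of the simple graph `G`: every vertex outside `M` is adjacent
to every vertex of `M` or to no vertex of `M`. -/
def GraphModule (G : SimpleGraph V) (M : Set V) : Prop :=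
  ∀ v ∉ M, (∀ x ∈ M, G.Adj v x) ∨ (∀ x ∈ M, ¬ G.Adj v x)

/-- `M` is a module of the digraph with arc relation `D`. -/
def DigraphModule (D : V → V → Prop) (M : Set V) : Prop :=
  ∀ v ∉ M, ∀ x ∈ M, ∀ y ∈ M, (D v x ↔ D v y) ∧ (D x v ↔ D y v)

/-- The digraph `D` is an orientation of the simple graph `G`: there is an arc between
`x` and `y` (in exactly one direction) iff `x` and `y` are adjacent in `G`. -/
def IsOrientation (G : SimpleGraph V) (D : V → V → Prop) : Prop :=
  ∀ x y : V, ((D x y ∨ D y x) ↔ G.Adj x y) ∧ ¬ (D x y ∧ D y x)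

/-- A graph is prime if it has at least 3 vertices and all its modules are trivial. -/
def GraphPrime [Fintype V] (G : SimpleGraph V) : Prop :=
  3 ≤ Fintype.card V ∧
    ∀ M : Set V, GraphModule G M → M.Subsingleton ∨ M = Set.univ

/-- A digraph is prime if it has at least 3 vertices and all its modules are trivial. -/
def DigraphPrime [Fintype V] (D : V → V → Prop) : Prop :=
  3 ≤ Fintype.card V ∧
    ∀ M : Set V, DigraphModule D M → M.Subsingleton ∨ M = Set.univ

/-- A graph is primarily orientable if it admits a prime orientation. -/
def PrimarilyOrientable [Fintype V] (G : SimpleGraph V) : Prop :=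
  ∃ D : V → V → Prop, IsOrientation G D ∧ DigraphPrime D

/-- `S` is a stable module (s-module) of `G`: a module of size at least 2 inducing no edges. -/
def StableModule (G : SimpleGraph V) (S : Set V) : Prop :=
  GraphModule G S ∧ 2 ≤ S.ncard ∧ ∀ x ∈ S, ∀ y ∈ S, ¬ G.Adj x y

/-- The neighbourhood `N_G(M)` of a module `M`: the vertices outside `M` adjacent to
some (equivalently, every) vertex of `M`. -/
def modNbhd (G : SimpleGraph V) (M : Set V) : Set V :=
  {v | v ∉ M ∧ ∃ x ∈ M, G.Adj v x}

/-- `M` is a module of the subgraph of `G` induced on the vertex set `X`. -/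
def ModuleOn (G : SimpleGraph V) (X M : Set V) : Prop :=
  M ⊆ X ∧ ∀ v ∈ X \ M, (∀ x ∈ M, G.Adj v x) ∨ (∀ x ∈ M, ¬ G.Adj v x)

/-- `S` is an s-duo (stable module of size 2) of the subgraph of `G` induced on `X`. -/
def SduoOn (G : SimpleGraph V) (X S : Set V) : Prop :=
  ModuleOn G X S ∧ S.ncard = 2 ∧ ∀ x ∈ S, ∀ y ∈ S, ¬ G.Adj x y

/-- `S` is an s-duo of `G`. -/
def Sduo (G : SimpleGraph V) (S : Set V) : Prop :=
  SduoOn G Set.univ S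

/-- `G` has no s-duo. -/
def SduoFree (G : SimpleGraph V) : Prop := ∀ S : Set V, ¬ Sduo G S

/-- `M` is a module of the subdigraph of `D` induced on the vertex set `X`. -/
def DModuleOn (D : V → V → Prop) (X M : Set V) : Prop :=
  M ⊆ X ∧ ∀ v ∈ X \ M, ∀ x ∈ M, ∀ y ∈ M, (D v x ↔ D v y) ∧ (D x v ↔ D y v)

/-- The subdigraph of `D` induced on `X` is prime. -/
def DPrimeOn (D : V → V → Prop) (X : Set V) : Prop :=
  3 ≤ X.ncard ∧ ∀ M : Set V, DModuleOn D X M → M.Subsingleton ∨ M = X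

/-- `Ext_D(X)`: vertices `v ∉ X` such that `D[X ∪ {v}]` is prime. -/
def ExtD (D : V → V → Prop) (X : Set V) : Set V :=
  {v | v ∉ X ∧ DPrimeOn D (X ∪ {v})}

/-- `⟨X⟩_D`: vertices `v ∉ X` such that `X` is a module of `D[X ∪ {v}]`. -/
def InnD (D : V → V → Prop) (X : Set V) : Set V :=
  {v | v ∉ X ∧ DModuleOn D (X ∪ {v}) X}

/-- `X_D(u)`: vertices `v ∉ X` such that `{u, v}` is a module of `D[X ∪ {v}]`. -/
def AttD (D : V → V → Prop) (X : Set V) (u : V) : Set V :=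
  {v | v ∉ X ∧ DModuleOn D (X ∪ {v}) ({u, v} : Set V)}


/-- If `D` is a prime orientation of `G` and `S` is a stable module of `G`, then
`x ↦ N⁺_D(x)` is an injective map from `S` into the power set of `N_G(S)`;
consequently `2 ^ d_G(S) ≥ |S|`. -/
theorem stable_module_card_le [Fintype V] (G : SimpleGraph V)
    (D : V → V → Prop) (hor : IsOrientation G D) (hprime : DigraphPrime D)
    (S : Set V) (hS : StableModule G S) :
    (∀ x ∈ S, {y | D x y} ⊆ modNbhd G S) ∧
    Set.InjOn (fun x => {y | D x y}) S ∧
    S.ncard ≤ 2 ^ (modNbhd G S).ncard := by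
  obtain ⟨hmod, hcard2, hstab⟩ := hS
  have hsub : ∀ x ∈ S, {y | D x y} ⊆ modNbhd G S := by
    intro x hx y hy
    have hadj : G.Adj x y := (hor x y).1.mp (Or.inl hy)
    exact ⟨fun hyS => hstab x hx y hyS hadj, x, hx, hadj.symm⟩
  have hinj : Set.InjOn (fun x => {y | D x y}) S := by
    intro a ha b hb hab
    by_contra hne
    simp only [Set.ext_iff, Set.mem_setOf_eq] at hab
    -- key iff: for any v, D v a ↔ D v b
    have hva : ∀ v, v ∉ ({a, b} : Set V) → (D v a ↔ D v b) := by
      intro v _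
      by_cases hvS : v ∈ S
      · constructor
        · intro h; exact absurd ((hor v a).1.mp (Or.inl h)) (hstab v hvS a ha)
        · intro h; exact absurd ((hor v b).1.mp (Or.inl h)) (hstab v hvS b hb)
      · rcases hmod v hvS with hall | hnone
        · have hAa := hall a ha
          have hAb := hall b hb
          have h1 : D v a ↔ ¬ D a v := by
            constructor
            · intro h hh; exact (hor v a).2 ⟨h, hh⟩
            · intro h
              rcases (hor v a).1.mpr hAa with h' | h'
              · exact h'
              · exact absurd h' h
          have h2 : D v b ↔ ¬ D b v := by
            constructor
            · intro h hh; exact (hor v b).2 ⟨h, hh⟩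
            · intro h
              rcases (hor v b).1.mpr hAb with h' | h'
              · exact h'
              · exact absurd h' h
          rw [h1, h2, hab v]
        · constructor
          · intro h; exact absurd ((hor v a).1.mp (Or.inl h)) (hnone a ha)
          · intro h; exact absurd ((hor v b).1.mp (Or.inl h)) (hnone b hb)
    have hmodab : DigraphModule D {a, b} := by
      intro v hv x hx y hy
      have key : ∀ p ∈ ({a, b} : Set V), ∀ q ∈ ({a, b} : Set V),
          (D v p ↔ D v q) ∧ (D p v ↔ D q v) := by
        intro p hp q hq
        rcases hp with hp | hp <;> rcases hq with hq | hq <;> subst hp <;> subst hq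
        · exact ⟨Iff.rfl, Iff.rfl⟩
        · exact ⟨hva v hv, hab v⟩
        · exact ⟨(hva v hv).symm, (hab v).symm⟩
        · exact ⟨Iff.rfl, Iff.rfl⟩
      exact key x hx y hy
    rcases hprime.2 {a, b} hmodab with hsing | huniv
    · exact hne (hsing (Set.mem_insert a {b}) (Set.mem_insert_of_mem a rfl))
    · have h2 : ({a, b} : Set V).ncard = 2 := Set.ncard_pair hne
      have h3 : ({a, b} : Set V).ncard = Fintype.card V := by
        rw [huniv, Set.ncard_univ, Nat.card_eq_fintype_card]
      have := hprime.1
      omega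
  refine ⟨hsub, hinj, ?_⟩
  have h1 : S.ncard ≤ (Set.powerset (modNbhd G S)).ncard :=
    Set.ncard_le_ncard_of_injOn _ (fun a ha => hsub a ha) hinj (Set.toFinite _)
  have h2 : (Set.powerset (modNbhd G S)).ncard = 2 ^ (modNbhd G S).ncard := by
    classical
    rw [← Nat.card_coe_set_eq, Nat.card_congr (Equiv.Set.powerset _),
      Nat.card_eq_fintype_card, Fintype.card_set, ← Nat.card_eq_fintype_card,
      Nat.card_coe_set_eq]
  omega
end

section
/- Let G be a connected finite simple graph and let M be a nontrivial module of G (i.e., 2 ≤ |M| and M ≠ V(G)). Then for every vertex v ∈ M, the induced subgraph G − v (on the vertex set V(G) \ {v}) is connected. -/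
variable {V : Type*}

/-- If `M` is a nontrivial module of a connected graph `G`, then for every `v ∈ M`,
the graph `G - v` is connected. -/
theorem removal_in_module_keeps_connected [Fintype V] (G : SimpleGraph V)
    (hconn : G.Connected)
    (M : Set V) (hM : GraphModule G M) (h2 : 2 ≤ M.ncard) (hMne : M ≠ Set.univ)
    (v : V) (hv : v ∈ M) :
    (G.induce ({v}ᶜ : Set V)).Connected := by
  classical
  -- pick u ∈ M with u ≠ v
  obtain ⟨u, huM, huv⟩ := Set.exists_ne_of_one_lt_ncard (s := M) (by omega) v
  have hu' : u ∈ ({v}ᶜ : Set V) := huv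
  -- there is a vertex outside M adjacent to all of M
  obtain ⟨w0, hw0⟩ : ∃ w0, w0 ∉ M := by
    by_contra h
    push_neg at h
    exact hMne (Set.eq_univ_of_forall h)
  have key : ∀ a, ∀ _ : G.Walk a v, a ∉ M → ∃ w, w ∉ M ∧ ∃ x ∈ M, G.Adj w x := by
    intro a p
    induction p with
    | nil => intro ha; exact absurd hv ha
    | @cons a c b h q ih =>
      intro ha
      by_cases hc : c ∈ M
      · exact ⟨_, ha, _, hc, h⟩
      · exact ih hv huv hu' hc
  obtain ⟨w, hwM, x, hxM, hwx⟩ := key w0 (hconn w0 v).some hw0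
  have hwall : ∀ x ∈ M, G.Adj w x := by
    rcases hM w hwM with h | h
    · exact h
    · exact absurd hwx (h x hxM)
  have hwv : w ∈ ({v}ᶜ : Set V) := fun h => hwM (h ▸ hv)
  set G' := G.induce ({v}ᶜ : Set V) with hG'
  have hadj : ∀ (a b : ({v}ᶜ : Set V)), G.Adj ↑a ↑b → G'.Adj a b := fun a b h => h
  -- key lemma: any neighbor b ≠ v of v is reachable from u in G'
  have L1 : ∀ (b : V) (hb : b ∈ ({v}ᶜ : Set V)), G.Adj v b →
      G'.Reachable ⟨u, hu'⟩ ⟨b, hb⟩ := by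
    intro b hb hvb
    by_cases hbM : b ∈ M
    · exact ((hadj ⟨u, hu'⟩ ⟨w, hwv⟩ (hwall u huM).symm).reachable).trans
        (hadj ⟨w, hwv⟩ ⟨b, hb⟩ (hwall b hbM)).reachable
    · rcases hM b hbM with h | h
      · exact (hadj ⟨u, hu'⟩ ⟨b, hb⟩ (h u huM).symm).reachable
      · exact absurd hvb.symm (h v hv)
  -- projection
  set φ : V → ({v}ᶜ : Set V) := fun x =>
    if h : x = v then ⟨u, hu'⟩ else ⟨x, h⟩ with hφ
  have main : ∀ (a b : V), G.Walk a b → G'.Reachable (φ a) (φ b) := by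
    intro a b p
    induction p with
    | nil => exact SimpleGraph.Reachable.refl _
    | @cons a c b h q ih =>
      refine SimpleGraph.Reachable.trans ?_ ih
      by_cases hav : a = v
      · have hcv : c ≠ v := fun hcv => G.ne_of_adj h (hav.trans hcv.symm)
        simpa [hφ, hav, hcv] using L1 c hcv (hav ▸ h)
      · by_cases hcv : c = v
        · simpa [hφ, hav, hcv] using (L1 a hav (hcv ▸ h).symm).symm
        · simpa [hφ, hav, hcv] using
            (hadj ⟨a, hav⟩ ⟨c, hcv⟩ h).reachable
  rw [SimpleGraph.connected_iff]
  refine ⟨?_, ⟨⟨u, hu'⟩⟩⟩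
  · intro x y
    obtain ⟨p⟩ := hconn (↑x) (↑y)
    have := main ↑x ↑y p
    have hx : φ ↑x = x := by
      simp [hφ, show (x : V) ≠ v from x.2]
    have hy : φ ↑y = y := by
      simp [hφ, show (y : V) ≠ v from y.2]
    rwa [hx, hy] at this
end

section
/- Let G be a finite simple graph with no s-duo (sduo-free). Then for every vertex v of G, the s-duos of G − v are pairwise disjoint: any two distinct s-duos of G − v have empty intersection. -/
variable {V : Type*}

lemma no_pair (G : SimpleGraph V) (hfree : SduoFree G) (x y : V) (hxy : x ≠ y)
    (hnadj : ¬ G.Adj x y)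
    (h : ∀ w, w ≠ x → w ≠ y → (G.Adj w x ↔ G.Adj w y)) : False := by
  apply hfree {x, y}
  refine ⟨⟨Set.subset_univ _, ?_⟩, Set.ncard_pair hxy, ?_⟩
  · intro w hw
    simp only [Set.mem_diff, Set.mem_univ, true_and, Set.mem_insert_iff,
      Set.mem_singleton_iff, not_or] at hw
    obtain ⟨hwx, hwy⟩ := hw
    by_cases hadj : G.Adj w x
    · left
      intro z hz
      rcases hz with rfl | rfl
      · exact hadj
      · exact (h w hwx hwy).mp hadj
    · right
      intro z hz
      rcases hz with rfl | rfl
      · exact hadj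
      · exact fun hc => hadj ((h w hwx hwy).mpr hc)
  · intro p hp q hq
    rcases hp with rfl | rfl <;> rcases hq with rfl | rfl
    · exact fun hc => G.irrefl hc
    · exact hnadj
    · exact fun hc => hnadj hc.symm
    · exact fun hc => G.irrefl hc

lemma moduleOn_iff {G : SimpleGraph V} {v a b : V}
    (hmod : ModuleOn G ({v}ᶜ : Set V) {a, b}) :
    ∀ w, w ≠ v → w ≠ a → w ≠ b → (G.Adj w a ↔ G.Adj w b) := by
  intro w hwv hwa hwb
  have hw : w ∈ ({v}ᶜ : Set V) \ {a, b} := by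
    simp [hwv, hwa, hwb]
  rcases hmod.2 w hw with h | h
  · exact ⟨fun _ => h b (by simp), fun _ => h a (by simp)⟩
  · exact ⟨fun hc => absurd hc (h a (by simp)), fun hc => absurd hc (h b (by simp))⟩

lemma main_aux (G : SimpleGraph V) (hfree : SduoFree G) (v a b c : V)
    (hab : a ≠ b) (hac : a ≠ c) (hbc : b ≠ c)
    (hav : a ≠ v) (hbv : b ≠ v) (hcv : c ≠ v)
    (hS : SduoOn G ({v}ᶜ : Set V) {a, b}) (hS' : SduoOn G ({v}ᶜ : Set V) {a, c}) :
    False := by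
  have iab := moduleOn_iff hS.1
  have iac := moduleOn_iff hS'.1
  have habn : ¬ G.Adj a b := hS.2.2 a (by simp) b (by simp)
  have hacn : ¬ G.Adj a c := hS'.2.2 a (by simp) c (by simp)
  have hbcn : ¬ G.Adj b c := by
    intro hc
    exact (fun h => habn h.symm) ((iac b hbv hab.symm hbc).mpr hc)
  have pairBC : (G.Adj v b ↔ G.Adj v c) → False := by
    intro hv
    refine no_pair G hfree b c hbc hbcn fun w hwb hwc => ?_
    by_cases hwv : w = v
    · subst hwv; exact hv
    by_cases hwa : w = a
    · subst hwa; exact ⟨fun hc => absurd hc habn, fun hc => absurd hc hacn⟩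
    · exact (iab w hwv hwa hwb).symm.trans (iac w hwv hwa hwc)
  have pairAB : (G.Adj v a ↔ G.Adj v b) → False := by
    intro hv
    refine no_pair G hfree a b hab habn fun w hwa hwb => ?_
    by_cases hwv : w = v
    · subst hwv; exact hv
    by_cases hwc : w = c
    · subst hwc
      exact ⟨fun hc => absurd hc.symm hacn, fun hc => absurd hc.symm hbcn⟩
    · exact iab w hwv hwa hwb
  have pairAC : (G.Adj v a ↔ G.Adj v c) → False := by
    intro hv
    refine no_pair G hfree a c hac hacn fun w hwa hwc => ?_
    by_cases hwv : w = v
    · subst hwv; exact hv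
    by_cases hwb : w = b
    · subst hwb
      exact ⟨fun hc => absurd hc.symm habn, fun hc => absurd hc hbcn⟩
    · exact iac w hwv hwa hwc
  by_cases hva : G.Adj v a <;> by_cases hvb : G.Adj v b <;> by_cases hvc : G.Adj v c <;>
    first
      | exact pairBC (by tauto)
      | exact pairAB (by tauto)
      | exact pairAC (by tauto)

lemma main_aux2 (G : SimpleGraph V) (hfree : SduoFree G) (v a b c : V)
    (hab : a ≠ b) (hac : a ≠ c)
    (hS : SduoOn G ({v}ᶜ : Set V) {a, b}) (hS' : SduoOn G ({v}ᶜ : Set V) {a, c})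
    (hne : ({a, b} : Set V) ≠ {a, c}) : False := by
  have hbc : b ≠ c := by rintro rfl; exact hne rfl
  have hav : a ≠ v := by
    simpa using hS.1.1 (show a ∈ ({a, b} : Set V) by simp)
  have hbv : b ≠ v := by
    simpa using hS.1.1 (show b ∈ ({a, b} : Set V) by simp)
  have hcv : c ≠ v := by
    simpa using hS'.1.1 (show c ∈ ({a, c} : Set V) by simp)
  exact main_aux G hfree v a b c hab hac hbc hav hbv hcv hS hS'

/-- If `G` is sduo-free, then for every vertex `v`, the s-duos of `G - v` are
pairwise disjoint. -/
theorem sduos_pairwise_disjoint [Fintype V] (G : SimpleGraph V)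
    (hfree : SduoFree G) (v : V) :
    ∀ S S' : Set V, SduoOn G ({v}ᶜ : Set V) S → SduoOn G ({v}ᶜ : Set V) S' →
      S ≠ S' → S ∩ S' = ∅ := by
  intro S S' hS hS' hne
  by_contra hI
  obtain ⟨a, haS, haS'⟩ := Set.nonempty_iff_ne_empty.mpr hI
  obtain ⟨x, y, hxy, rfl⟩ := Set.ncard_eq_two.mp hS.2.1
  obtain ⟨x', y', hxy', rfl⟩ := Set.ncard_eq_two.mp hS'.2.1
  simp only [Set.mem_insert_iff, Set.mem_singleton_iff] at haS haS'
  rcases haS with rfl | rfl <;> rcases haS' with rfl | rfl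
  · exact main_aux2 G hfree v a y y' hxy hxy' hS hS' hne
  · rw [Set.pair_comm x' a] at hS' hne
    exact main_aux2 G hfree v a y x' hxy (Ne.symm hxy') hS hS' hne
  · rw [Set.pair_comm x a] at hS hne
    exact main_aux2 G hfree v a x y' (Ne.symm hxy) hxy' hS hS' hne
  · rw [Set.pair_comm x a] at hS hne
    rw [Set.pair_comm x' a] at hS' hne
    exact main_aux2 G hfree v a x x' (Ne.symm hxy) (Ne.symm hxy') hS hS' hne
end

section
/- Let G be a connected, sduo-free finite simple graph with at least two vertices. Then there exists a vertex v of G such that G − v is connected and G − v has at most one s-duo. -/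
variable {V : Type*}

/-!
Two vertices `x ≠ y` form an s-duo of `G[X]` exactly when their neighbourhoods `N x`, `N y`
agree on `X`, so `G` is sduo-free iff `N` is injective. If some `G - w` has an s-duo `{x, y}`, then `w`
separates them, say `w ∈ N x`, and `N y = N x \ {w}`. Deleting `y` keeps `G` connected
(`x` takes over the role of `y`), and any s-duo `{p, q}` of `G - y` with `y ∈ N p` is forced to
have `q = w`; two such s-duos `{p, w}`, `{p', w}` would give `N p = N p'`, so `p = p'`.
If no `G - w` has an s-duo, any non-cut vertex works.
-/

section

variable {G : SimpleGraph V}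

open SimpleGraph

lemma Set.eq_of_sdiff_singleton_eq {s t : Set V} {a : V} (h : s \ {a} = t \ {a})
    (hs : a ∈ s) (ht : a ∈ t) : s = t := by
  rw [← Set.insert_sdiff_self_of_mem hs, ← Set.insert_sdiff_self_of_mem ht, h]

lemma sduoOn_iff {X S : Set V} :
    SduoOn G X S ↔ ∃ x ∈ X, ∃ y ∈ X, x ≠ y ∧ S = {x, y} ∧
      G.neighborSet x ∩ X = G.neighborSet y ∩ X := by
  constructor
  · rintro ⟨⟨hsub, hmod⟩, hcard, hstab⟩
    obtain ⟨x, y, hxy, rfl⟩ := Set.ncard_eq_two.mp hcard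
    refine ⟨x, hsub (by simp), y, hsub (by simp), hxy, rfl, ?_⟩
    ext z
    simp only [Set.mem_inter_iff, mem_neighborSet, adj_comm _ _ z]
    refine and_congr_left fun hz => ?_
    by_cases hzx : z = x
    · subst hzx
      exact iff_of_false G.irrefl (hstab _ (by simp) _ (by simp))
    by_cases hzy : z = y
    · subst hzy
      exact iff_of_false (hstab _ (by simp) _ (by simp)) G.irrefl
    rcases hmod z ⟨hz, by simp [hzx, hzy]⟩ with hall | hnone
    · exact iff_of_true (hall x (by simp)) (hall y (by simp))
    · exact iff_of_false (hnone x (by simp)) (hnone y (by simp))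
  · rintro ⟨x, hx, y, hy, hxy, rfl, hN⟩
    have hadj : ∀ z ∈ X, G.Adj z x ↔ G.Adj z y := fun z hz => by
      simpa [adj_comm _ _ z, hz] using Set.ext_iff.mp hN z
    -- `z = x` in `hadj` turns looplessness into the stability of `{x, y}`
    have hnxy : ¬ G.Adj x y := fun h => G.irrefl ((hadj x hx).mpr h)
    refine ⟨⟨Set.insert_subset hx (Set.singleton_subset_iff.mpr hy), fun z hz => ?_⟩,
      Set.ncard_pair hxy, ?_⟩
    · by_cases hzx : G.Adj z x
      · exact .inl <| by rintro t (rfl | rfl) <;> simp_all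
      · exact .inr <| by rintro t (rfl | rfl) <;> simp_all
    · rintro p (rfl | rfl) q (rfl | rfl) <;> simp_all [adj_comm]

lemma SduoFree.neighborSet_injective (hfree : SduoFree G) : Function.Injective G.neighborSet := by
  intro x y hxy
  by_contra hne
  exact hfree {x, y} (sduoOn_iff.mpr ⟨x, trivial, y, trivial, hne, rfl, by rw [hxy]⟩)

lemma SduoFree.exists_of_sduoOn_compl_singleton (hfree : SduoFree G) {w : V} {S : Set V}
    (hS : SduoOn G {w}ᶜ S) :
    ∃ x y, S = {x, y} ∧ w ∈ G.neighborSet x ∧ G.neighborSet y = G.neighborSet x \ {w} := by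
  obtain ⟨x, -, y, -, hxy, rfl, hN⟩ := sduoOn_iff.mp hS
  simp only [← Set.sdiff_eq] at hN
  have hne : G.neighborSet x ≠ G.neighborSet y := hfree.neighborSet_injective.ne hxy
  by_cases hwx : w ∈ G.neighborSet x <;> by_cases hwy : w ∈ G.neighborSet y
  · exact absurd (Set.eq_of_sdiff_singleton_eq hN hwx hwy) hne
  · exact ⟨x, y, rfl, hwx, by rw [hN, Set.sdiff_singleton_eq_self hwy]⟩
  · exact ⟨y, x, Set.pair_comm x y, hwy, by rw [← hN, Set.sdiff_singleton_eq_self hwx]⟩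
  · rw [Set.sdiff_singleton_eq_self hwx, Set.sdiff_singleton_eq_self hwy] at hN
    exact absurd hN hne

lemma SimpleGraph.Connected.induce_compl_singleton_of_neighborSet_subset
    (hconn : G.Connected) {a b : V} (hab : a ≠ b)
    (hN : G.neighborSet b ⊆ G.neighborSet a) : (G.induce {b}ᶜ).Connected := by
  classical
  have hmem (v : V) : (if v = b then a else v) ∈ ({b}ᶜ : Set V) := by
    split_ifs with hv
    exacts [hab, hv]
  let retract : G →g G.induce {b}ᶜ :=
    { toFun := fun v => ⟨if v = b then a else v, hmem v⟩
      map_rel' := fun {u v} huv => by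
        simp only [induce_adj]
        split_ifs with hu hv hv'
        · exact absurd (hu ▸ hv ▸ huv) G.irrefl
        · exact hN (hu ▸ huv)
        · exact (hN (hv' ▸ huv.symm)).symm
        · exact huv }
  refine hconn.map retract fun ⟨v, hv⟩ => ⟨v, ?_⟩
  simp [retract, show v ≠ b from hv]

lemma ne_of_neighborSet_eq_sdiff {w x y : V} (hwx : w ∈ G.neighborSet x)
    (hy : G.neighborSet y = G.neighborSet x \ {w}) : x ≠ y := by
  rintro rfl
  rw [hy] at hwx
  exact hwx.2 rfl

lemma eq_of_neighborSet_eq_sdiff {w x y p q : V} (hwx : w ∈ G.neighborSet x)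
    (hy : G.neighborSet y = G.neighborSet x \ {w}) (hyp : y ∈ G.neighborSet p)
    (hq : G.neighborSet q = G.neighborSet p \ {y}) : q = w := by
  have hxy : x ≠ y := ne_of_neighborSet_eq_sdiff hwx hy
  have hpx : p ∈ G.neighborSet x := by
    have hpy : p ∈ G.neighborSet y := G.adj_symm hyp
    rw [hy] at hpy
    exact hpy.1
  have hxq : x ∈ G.neighborSet q := by
    rw [hq]
    exact ⟨G.adj_symm hpx, hxy⟩
  by_contra hqw
  have hqy : q ∈ G.neighborSet y := by
    rw [hy]
    exact ⟨G.adj_symm hxq, hqw⟩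
  have hyq : y ∈ G.neighborSet q := G.adj_symm hqy
  rw [hq] at hyq
  exact hyq.2 rfl

lemma SduoFree.eq_of_sduoOn_compl_singleton (hfree : SduoFree G) {w x y : V}
    (hwx : w ∈ G.neighborSet x) (hy : G.neighborSet y = G.neighborSet x \ {w}) {S S' : Set V}
    (hS : SduoOn G {y}ᶜ S) (hS' : SduoOn G {y}ᶜ S') : S = S' := by
  have hpair (T : Set V) (hT : SduoOn G {y}ᶜ T) :
      ∃ p, T = {p, w} ∧ y ∈ G.neighborSet p ∧ G.neighborSet w = G.neighborSet p \ {y} := by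
    obtain ⟨p, q, rfl, hyp, hq⟩ := hfree.exists_of_sduoOn_compl_singleton hT
    obtain rfl := eq_of_neighborSet_eq_sdiff hwx hy hyp hq
    exact ⟨p, rfl, hyp, hq⟩
  obtain ⟨p, rfl, hyp, hp⟩ := hpair S hS
  obtain ⟨p', rfl, hyp', hp'⟩ := hpair S' hS'
  rw [hfree.neighborSet_injective (Set.eq_of_sdiff_singleton_eq (hp.symm.trans hp') hyp hyp')]

end

/-- If `G` is connected and sduo-free with at least two vertices, then there is a vertex
`v` such that `G - v` is connected and has at most one s-duo. -/
theorem exists_good_vertex [Fintype V] (G : SimpleGraph V)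
    (hcard : 2 ≤ Fintype.card V) (hconn : G.Connected) (hfree : SduoFree G) :
    ∃ v : V, (G.induce ({v}ᶜ : Set V)).Connected ∧
      ∀ S S' : Set V, SduoOn G ({v}ᶜ : Set V) S → SduoOn G ({v}ᶜ : Set V) S' →
        S = S' := by
  by_cases h : ∃ w S, SduoOn G {w}ᶜ S
  · obtain ⟨w, S, hS⟩ := h
    obtain ⟨x, y, -, hwx, hy⟩ := hfree.exists_of_sduoOn_compl_singleton hS
    have hyx : G.neighborSet y ⊆ G.neighborSet x := hy ▸ Set.sdiff_subset
    exact ⟨y, hconn.induce_compl_singleton_of_neighborSet_subset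
      (ne_of_neighborSet_eq_sdiff hwx hy) hyx,
      fun S S' => hfree.eq_of_sduoOn_compl_singleton hwx hy⟩
  · have : Nontrivial V := Fintype.one_lt_card_iff_nontrivial.mp hcard
    obtain ⟨v, hv⟩ := hconn.exists_connected_induce_compl_singleton_of_finite_nontrivial
    exact ⟨v, hv, fun S _ hS => (h ⟨v, S, hS⟩).elim⟩
end

section
/- For every integer n ≥ 2, the half graph G_{2n} — the graph with vertex set {0, 1, …, 2n−1} and edge set {{2i, 2j+1} : 0 ≤ i ≤ j ≤ n−1} — is prime: it has at least 3 vertices and all its modules are trivial. -/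
variable {V : Type*}

/-- The half graph `G_{2n}`: vertex set `{0, …, 2n - 1}` and edges `{2i, 2j + 1}`
for `0 ≤ i ≤ j ≤ n - 1`. -/
def halfGraph (n : ℕ) : SimpleGraph (Fin (2 * n)) :=
  SimpleGraph.fromRel
    (fun a b => ∃ i j : ℕ, i ≤ j ∧ j < n ∧ (a : ℕ) = 2 * i ∧ (b : ℕ) = 2 * j + 1)

lemma halfGraph_adj (n : ℕ) (a b : Fin (2*n)) :
    (halfGraph n).Adj a b ↔
      ((a:ℕ) % 2 = 0 ∧ (b:ℕ) % 2 = 1 ∧ (a:ℕ) ≤ (b:ℕ)) ∨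
      ((b:ℕ) % 2 = 0 ∧ (a:ℕ) % 2 = 1 ∧ (b:ℕ) ≤ (a:ℕ)) := by
  have ha := a.isLt; have hb := b.isLt
  simp only [halfGraph, SimpleGraph.fromRel_adj]
  constructor
  · rintro ⟨hne, h | h⟩ <;> obtain ⟨i, j, h1, h2, h3, h4⟩ := h
    · left; omega
    · right; omega
  · intro h
    have hne : a ≠ b := by
      intro e
      have : (a:ℕ) = (b:ℕ) := congrArg Fin.val e
      omega
    refine ⟨hne, ?_⟩
    rcases h with ⟨h1, h2, h3⟩ | ⟨h1, h2, h3⟩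
    · exact Or.inl ⟨(a:ℕ)/2, (b:ℕ)/2, by omega, by omega, by omega, by omega⟩
    · exact Or.inr ⟨(b:ℕ)/2, (a:ℕ)/2, by omega, by omega, by omega, by omega⟩

/-- For every `n ≥ 2`, the half graph `G_{2n}` is prime. -/
theorem halfGraph_prime (n : ℕ) (hn : 2 ≤ n) :
    GraphPrime (halfGraph n) := by
  refine ⟨by simp only [Fintype.card_fin]; omega, ?_⟩
  intro M hM
  by_cases hs : M.Subsingleton
  · exact Or.inl hs
  right
  rw [Set.not_subsingleton_iff] at hs
  obtain ⟨a, ha, b, hb, hab⟩ := hs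
  have key : ∀ (v x y : Fin (2*n)), x ∈ M → y ∈ M →
      (halfGraph n).Adj v x → ¬ (halfGraph n).Adj v y → v ∈ M := by
    intro v x y hx hy hvx hvy
    by_contra hv
    rcases hM v hv with h | h
    · exact hvy (h y hy)
    · exact h x hx hvx
  obtain ⟨c, hc, d, hd, hcd⟩ : ∃ c ∈ M, ∃ d ∈ M, (c:ℕ) < (d:ℕ) := by
    have hval : (a:ℕ) ≠ (b:ℕ) := fun h => hab (Fin.ext h)
    rcases hval.lt_or_gt with h | h
    exacts [⟨a, ha, b, hb, h⟩, ⟨b, hb, a, ha, h⟩]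
  have hc2 := c.isLt; have hd2 := d.isLt
  obtain ⟨u, hu, w, hw, hue, hwo⟩ :
      ∃ u ∈ M, ∃ w ∈ M, (u:ℕ) % 2 = 0 ∧ (w:ℕ) % 2 = 1 := by
    rcases Nat.mod_two_eq_zero_or_one (c:ℕ) with hcp | hcp <;>
      rcases Nat.mod_two_eq_zero_or_one (d:ℕ) with hdp | hdp
    · -- both even
      have hlt : (c:ℕ)+1 < 2*n := by omega
      set v : Fin (2*n) := ⟨(c:ℕ)+1, hlt⟩ with hvdef
      have hvv : (v:ℕ) = (c:ℕ)+1 := rfl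
      have hvm : v ∈ M := key v c d hc hd
        (by rw [halfGraph_adj]; omega) (by rw [halfGraph_adj]; omega)
      exact ⟨c, hc, v, hvm, hcp, by omega⟩
    · exact ⟨c, hc, d, hd, hcp, hdp⟩
    · exact ⟨d, hd, c, hc, hdp, hcp⟩
    · -- both odd
      have hlt : (c:ℕ)+1 < 2*n := by omega
      set v : Fin (2*n) := ⟨(c:ℕ)+1, hlt⟩ with hvdef
      have hvv : (v:ℕ) = (c:ℕ)+1 := rfl
      have hvm : v ∈ M := key v d c hd hc
        (by rw [halfGraph_adj]; omega) (by rw [halfGraph_adj]; omega)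
      exact ⟨v, hvm, c, hc, by omega, hcp⟩
  have hu2 := u.isLt; have hw2 := w.isLt
  set top : Fin (2*n) := ⟨2*n-1, by omega⟩ with htopdef
  set bot : Fin (2*n) := ⟨0, by omega⟩ with hbotdef
  have htv : (top:ℕ) = 2*n-1 := rfl
  have hbv : (bot:ℕ) = 0 := rfl
  have htopM : top ∈ M := key top u w hu hw
    (by rw [halfGraph_adj]; omega) (by rw [halfGraph_adj]; omega)
  have hbotM : bot ∈ M := key bot w u hw hu
    (by rw [halfGraph_adj]; omega) (by rw [halfGraph_adj]; omega)
  ext v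
  simp only [Set.mem_univ, iff_true]
  have hv2 := v.isLt
  rcases Nat.mod_two_eq_zero_or_one (v:ℕ) with hvp | hvp
  · exact key v top bot htopM hbotM
      (by rw [halfGraph_adj]; omega) (by rw [halfGraph_adj]; omega)
  · exact key v bot top hbotM htopM
      (by rw [halfGraph_adj]; omega) (by rw [halfGraph_adj]; omega)
end

section
/- Let D be a digraph and let X ⊆ V(D) be such that the induced subdigraph D[X] is prime. Then the sets Ext_D(X), ⟨X⟩_D, and X_D(u) for u ∈ X are pairwise disjoint and their union is V(D) \ X. -/
variable {V : Type*}

/-!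
Each disjointness comes from a module of `D[X]` or of a prime `D[X ∪ {v}]` that would have
to be trivial although it is neither a singleton nor the whole set: `X` itself, `{u, v}`,
`X \ {u}` (if `v` is a twin of `u` seeing `X` uniformly, then so does `u` on `X \ {u}`) and
`{u, u'}` (if `v` is a twin of both). For the covering, a nontrivial proper module `M` of a
non-prime `D[X ∪ {v}]` meets `X` in a module of `D[X]`, so `M ∩ X` is `X` or at most a
singleton, which leaves `M = X` or `M = {u, v}`.
-/

variable {D : V → V → Prop} {X M : Set V} {u u' v w x y : V}

theorem DModuleOn.inter_of_subset {Y : Set V} (hM : DModuleOn D Y M) (hXY : X ⊆ Y) :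
    DModuleOn D X (M ∩ X) :=
  ⟨Set.inter_subset_right, fun w hw x hx y hy =>
    hM.2 w ⟨hXY hw.1, fun hwM => hw.2 ⟨hwM, hw.1⟩⟩ x hx.1 y hy.1⟩

namespace DPrimeOn

theorem finite (hX : DPrimeOn D X) : X.Finite :=
  Set.finite_of_ncard_pos (by have := hX.1; omega)

theorem not_subset_insert {S : Set V} (hX : DPrimeOn D X) (hS : S.Subsingleton) :
    ¬ X ⊆ insert u S := fun hXS => by
  have hS1 : S.ncard ≤ 1 := (@Set.ncard_le_one_iff_subsingleton _ S hS.finite).2 hS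
  have := Set.ncard_le_ncard hXS (hS.finite.insert u)
  have := Set.ncard_insert_le u S
  have := hX.1
  omega

theorem three_le_ncard_union_singleton (hX : DPrimeOn D X) (v : V) :
    3 ≤ (X ∪ {v}).ncard :=
  hX.1.trans <| Set.ncard_le_ncard Set.subset_union_left <|
    hX.finite.union (Set.finite_singleton v)

theorem eq_of_dModuleOn_union_singleton (hX : DPrimeOn D X) (hM : DModuleOn D (X ∪ {v}) M)
    (hMnt : M.Nontrivial) : M = X ∨ M = X ∪ {v} ∨ ∃ u ∈ X, M = {u, v} := by
  have hMX : ∀ x ∈ M, x ≠ v → x ∈ X := fun x hx hxv =>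
    (hM.1 hx).resolve_right hxv
  rcases hX.2 _ (hM.inter_of_subset Set.subset_union_left) with hs | he
  · obtain ⟨u, huM, huv⟩ := hMnt.exists_ne v
    have hvM : v ∈ M := by
      by_contra hvM
      exact hMnt.not_subsingleton
        (hs.anti fun x hx => ⟨hx, hMX x hx fun h => hvM (h ▸ hx)⟩)
    refine Or.inr (Or.inr ⟨u, hMX u huM huv, Set.Subset.antisymm (fun x hx => ?_)
      (Set.insert_subset_iff.2 ⟨huM, Set.singleton_subset_iff.2 hvM⟩)⟩)
    by_cases hxv : x = v
    · exact Or.inr hxv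
    · exact Or.inl (hs ⟨hx, hMX x hx hxv⟩ ⟨huM, hMX u huM huv⟩)
  · have hXM : X ⊆ M := fun x hx => (he.symm ▸ hx : x ∈ M ∩ X).1
    by_cases hvM : v ∈ M
    · exact Or.inr (Or.inl (hM.1.antisymm
        (Set.union_subset hXM (Set.singleton_subset_iff.2 hvM))))
    · exact Or.inl (Set.Subset.antisymm (fun x hx => hMX x hx fun h => hvM (h ▸ hx)) hXM)

end DPrimeOn

theorem arc_iff_of_mem_innD (hv : v ∈ InnD D X) (hx : x ∈ X) (hy : y ∈ X) :
    (D v x ↔ D v y) ∧ (D x v ↔ D y v) :=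
  hv.2.2 v ⟨Or.inr rfl, hv.1⟩ x hx y hy

theorem arc_iff_of_mem_attD (hv : v ∈ AttD D X u) (hw : w ∈ X) (hwu : w ≠ u) :
    (D w u ↔ D w v) ∧ (D u w ↔ D v w) := by
  have hwv : w ≠ v := fun h => hv.1 (h ▸ hw)
  exact hv.2.2 w ⟨Or.inl hw, by simp [hwu, hwv]⟩ u (by simp) v (by simp)

theorem dModuleOn_diff_singleton_of_mem_innD_of_mem_attD (hu : u ∈ X) (hInn : v ∈ InnD D X)
    (hAtt : v ∈ AttD D X u) : DModuleOn D X (X \ {u}) := by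
  refine ⟨Set.sdiff_subset, fun w hw x hx y hy => ?_⟩
  obtain rfl : w = u := by simpa [hw.1] using hw.2
  have hvxy := arc_iff_of_mem_innD hInn hx.1 hy.1
  have hux := arc_iff_of_mem_attD hAtt hx.1 hx.2
  have huy := arc_iff_of_mem_attD hAtt hy.1 hy.2
  exact ⟨hux.2.trans (hvxy.1.trans huy.2.symm), hux.1.trans (hvxy.2.trans huy.1.symm)⟩

theorem dModuleOn_pair_of_mem_attD (hu : u ∈ X) (hu' : u' ∈ X) (hv : v ∈ AttD D X u)
    (hv' : v ∈ AttD D X u') : DModuleOn D X {u, u'} := by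
  refine ⟨Set.insert_subset_iff.2 ⟨hu, Set.singleton_subset_iff.2 hu'⟩,
    fun w hw x hx y hy => ?_⟩
  have hwu : w ≠ u := fun h => hw.2 (h ▸ Or.inl rfl)
  have hwu' : w ≠ u' := fun h => hw.2 (h ▸ Or.inr rfl)
  have twin : ∀ z ∈ ({u, u'} : Set V), (D w z ↔ D w v) ∧ (D z w ↔ D v w) := by
    rintro z (rfl | rfl)
    exacts [arc_iff_of_mem_attD hv hw.1 hwu, arc_iff_of_mem_attD hv' hw.1 hwu']
  exact ⟨(twin x hx).1.trans (twin y hy).1.symm, (twin x hx).2.trans (twin y hy).2.symm⟩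

theorem DPrimeOn.mem_extD_or_mem_innD_or_mem_attD (hX : DPrimeOn D X) (hv : v ∉ X) :
    v ∈ ExtD D X ∨ v ∈ InnD D X ∨ ∃ u ∈ X, v ∈ AttD D X u := by
  by_cases hExt : DPrimeOn D (X ∪ {v})
  · exact Or.inl ⟨hv, hExt⟩
  unfold DPrimeOn at hExt
  push Not at hExt
  obtain ⟨M, hM, hMnt, hMne⟩ := hExt (hX.three_le_ncard_union_singleton v)
  rcases hX.eq_of_dModuleOn_union_singleton hM hMnt with rfl | he | ⟨u, hu, rfl⟩
  · exact Or.inr (Or.inl ⟨hv, hM⟩)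
  · exact absurd he hMne
  · exact Or.inr (Or.inr ⟨u, hu, hv, hM⟩)

theorem partition_of_complement_general (D : V → V → Prop)
    (X : Set V) (hX : DPrimeOn D X) :
    Disjoint (ExtD D X) (InnD D X) ∧
    (∀ u ∈ X, Disjoint (ExtD D X) (AttD D X u)) ∧
    (∀ u ∈ X, Disjoint (InnD D X) (AttD D X u)) ∧
    (∀ u ∈ X, ∀ u' ∈ X, u ≠ u' → Disjoint (AttD D X u) (AttD D X u')) ∧
    (ExtD D X ∪ InnD D X ∪ ⋃ u ∈ X, AttD D X u) = Xᶜ := by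
  refine ⟨?_, ?_, ?_, ?_, ?_⟩
  · refine Set.disjoint_left.2 fun v ⟨hv, hExt⟩ ⟨_, hInn⟩ => ?_
    rcases hExt.2 X hInn with hs | he
    · exact hX.not_subset_insert hs (Set.subset_insert v X)
    · exact hv (he ▸ Or.inr rfl)
  · refine fun u hu => Set.disjoint_left.2 fun v ⟨hv, hExt⟩ ⟨_, hAtt⟩ => ?_
    rcases hExt.2 _ hAtt with hs | he
    · exact hv (hs (Or.inr rfl) (Or.inl rfl) ▸ hu)
    · exact hX.not_subset_insert Set.subsingleton_singleton (he ▸ Set.subset_union_left)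
  · refine fun u hu => Set.disjoint_left.2 fun v hInn hAtt => ?_
    rcases hX.2 _ (dModuleOn_diff_singleton_of_mem_innD_of_mem_attD hu hInn hAtt) with hs | he
    · exact hX.not_subset_insert hs (Set.subset_insert_sdiff_singleton u X)
    · exact (he.symm ▸ hu : u ∈ X \ {u}).2 rfl
  · refine fun u hu u' hu' huu' => Set.disjoint_left.2 fun v hv hv' => ?_
    rcases hX.2 _ (dModuleOn_pair_of_mem_attD hu hu' hv hv') with hs | he
    · exact huu' (hs (Or.inl rfl) (Or.inr rfl))
    · exact hX.not_subset_insert Set.subsingleton_singleton he.ge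
  · refine Set.Subset.antisymm ?_ fun v hv => ?_
    · exact Set.union_subset (Set.union_subset (fun v hv => hv.1) fun v hv => hv.1)
        (Set.iUnion₂_subset fun u _ v hv => hv.1)
    rcases hX.mem_extD_or_mem_innD_or_mem_attD hv with hExt | hInn | ⟨u, hu, hAtt⟩
    exacts [Or.inl (Or.inl hExt), Or.inl (Or.inr hInn), Or.inr (Set.mem_biUnion hu hAtt)]

/-- If `D[X]` is prime, the sets `Ext_D(X)`, `⟨X⟩_D` and `X_D(u)` for `u ∈ X` are
pairwise disjoint, and their union is `V(D) \\ X`. -/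
theorem partition_of_complement [Fintype V] (D : V → V → Prop)
    (X : Set V) (hX : DPrimeOn D X) :
    Disjoint (ExtD D X) (InnD D X) ∧
    (∀ u ∈ X, Disjoint (ExtD D X) (AttD D X u)) ∧
    (∀ u ∈ X, Disjoint (InnD D X) (AttD D X u)) ∧
    (∀ u ∈ X, ∀ u' ∈ X, u ≠ u' → Disjoint (AttD D X u) (AttD D X u')) ∧
    (ExtD D X ∪ InnD D X ∪ ⋃ u ∈ X, AttD D X u) = Xᶜ :=
  partition_of_complement_general D X hX
end

section
/- Let D be a digraph and let X ⊆ V(D) be such that the induced subdigraph D[X] is prime. Let u ∈ ⟨X⟩_D and let v ∈ (V(D) \ X) \ ⟨X⟩_D. If X ∪ {v} is not a module of D[X ∪ {u,v}], then D[X ∪ {u,v}] is prime. -/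
variable {V : Type*}

/-- Lemma (ER, 6.3/6.4, assertion 1): if `u ∈ ⟨X⟩_D`, `v ∉ X ∪ ⟨X⟩_D`, and
`X ∪ {v}` is not a module of `D[X ∪ {u, v}]`, then `D[X ∪ {u, v}]` is prime. -/
theorem prime_extension_inn [Fintype V] (D : V → V → Prop)
    (X : Set V) (hX : DPrimeOn D X)
    (u v : V) (hu : u ∈ InnD D X) (hv : v ∈ Xᶜ \ InnD D X)
    (hmod : ¬ DModuleOn D (X ∪ {u, v}) (X ∪ {v})) :
    DPrimeOn D (X ∪ {u, v}) := by
  obtain ⟨huX, huM⟩ := hu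
  have hvX : v ∉ X := hv.1
  have hvM : ¬ DModuleOn D (X ∪ {v}) X := fun h => hv.2 ⟨hvX, h⟩
  have huv : u ≠ v := by
    intro h
    apply hmod
    rw [h]
    have hpair : ({v, v} : Set V) = {v} := by simp
    rw [hpair]
    exact ⟨subset_rfl, fun w hw => absurd hw.1 hw.2⟩
  have huu : u ∈ (X ∪ {u}) \ X := ⟨Or.inr rfl, huX⟩
  have hu1 : ∀ x ∈ X, ∀ y ∈ X, D u x ↔ D u y := fun x hx y hy => (huM.2 u huu x hx y hy).1
  have hu2 : ∀ x ∈ X, ∀ y ∈ X, D x u ↔ D y u := fun x hx y hy => (huM.2 u huu x hx y hy).2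
  -- u separates v from every element of X
  have hsep : ∀ a ∈ X, ¬ ((D u v ↔ D u a) ∧ (D v u ↔ D a u)) := by
    intro a ha hc
    apply hmod
    refine ⟨fun z hz => by rcases hz with h | h; exacts [Or.inl h, Or.inr (Or.inr h)], ?_⟩
    intro w hw x hx y hy
    have hwu : w = u := by
      rcases hw.1 with h | h
      · exact absurd (Or.inl h) hw.2
      · rcases h with h | h
        · exact h
        · exact absurd (Or.inr h) hw.2
    rw [hwu]
    have key : ∀ z ∈ X ∪ ({v} : Set V), (D u z ↔ D u a) ∧ (D z u ↔ D a u) := by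
      intro z hz
      rcases hz with hz | hz
      · exact ⟨hu1 z hz a ha, hu2 z hz a ha⟩
      · rw [Set.mem_singleton_iff] at hz
        subst hz
        exact hc
    exact ⟨(key x hx).1.trans (key y hy).1.symm, (key x hx).2.trans (key y hy).2.symm⟩
  constructor
  · calc 3 ≤ X.ncard := hX.1
      _ ≤ (X ∪ {u, v}).ncard := Set.ncard_le_ncard Set.subset_union_left (Set.toFinite _)
  · intro M hM
    have huW : u ∈ X ∪ ({u, v} : Set V) := Or.inr (Or.inl rfl)
    have hvW : v ∈ X ∪ ({u, v} : Set V) := Or.inr (Or.inr rfl)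
    have hMX : DModuleOn D X (M ∩ X) :=
      ⟨Set.inter_subset_right, fun w hw x hx y hy =>
        hM.2 w ⟨Or.inl hw.1, fun hm => hw.2 ⟨hm, hw.1⟩⟩ x hx.1 y hy.1⟩
    -- key auxiliary contradictions
    -- L1: if a ∈ M ∩ X, u ∈ M and M ∩ X ⊆ {a}, contradiction via X \ {a} being a module of D[X]
    have L1 : ∀ a, a ∈ M ∩ X → u ∈ M → (∀ z ∈ M ∩ X, z = a) → False := by
      intro a ha hum hone
      have hmodX : DModuleOn D X (X \ {a}) := by
        refine ⟨Set.diff_subset, ?_⟩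
        intro w hw x hx y hy
        have hwa : w = a := by
          by_contra h
          exact hw.2 ⟨hw.1, h⟩
        rw [hwa]
        have key : ∀ z ∈ X \ ({a} : Set V), (D a z ↔ D u a) ∧ (D z a ↔ D a u) := by
          intro z hz
          have hzM : z ∉ M := fun h => hz.2 (hone z ⟨h, hz.1⟩)
          have h1 := hM.2 z ⟨Or.inl hz.1, hzM⟩ a ha.1 u hum
          exact ⟨h1.2.trans (hu1 z hz.1 a ha.2), h1.1.trans (hu2 z hz.1 a ha.2)⟩
        exact ⟨(key x hx).1.trans (key y hy).1.symm, (key x hx).2.trans (key y hy).2.symm⟩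
      rcases hX.2 _ hmodX with h | h
      · have h3 : X.ncard = (X \ {a}).ncard + 1 :=
          (Set.ncard_diff_singleton_add_one ha.2 (Set.toFinite X)).symm
        have h4 : (X \ {a}).ncard ≤ 1 := by
          rcases h.eq_empty_or_singleton with h5 | ⟨b, h5⟩ <;> simp [h5]
        have := hX.1
        omega
      · have : a ∈ X \ {a} := by rw [h]; exact ha.2
        exact this.2 rfl
    -- L2: if a ∈ M ∩ X, v ∈ M and u ∉ M, contradiction via hsep
    have L2 : ∀ a, a ∈ M ∩ X → v ∈ M → u ∉ M → False := by
      intro a ha hvm hum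
      have h1 := hM.2 u ⟨huW, hum⟩ a ha.1 v hvm
      exact hsep a ha.2 ⟨h1.1.symm, h1.2.symm⟩
    -- L3: if u ∈ M, v ∈ M and M ∩ X = ∅, contradiction: X is a module of D[X ∪ {v}]
    have L3 : u ∈ M → v ∈ M → M ∩ X = ∅ → False := by
      intro hum hvm hempty
      apply hvM
      refine ⟨Set.subset_union_left, ?_⟩
      intro w hw x hx y hy
      have hwv : w = v := by
        rcases hw.1 with h | h
        · exact absurd h hw.2
        · exact h
      rw [hwv]
      have hxM : x ∉ M := fun h => Set.eq_empty_iff_forall_notMem.mp hempty x ⟨h, hx⟩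
      have hyM : y ∉ M := fun h => Set.eq_empty_iff_forall_notMem.mp hempty y ⟨h, hy⟩
      have h1 := hM.2 x ⟨Or.inl hx, hxM⟩ u hum v hvm
      have h2 := hM.2 y ⟨Or.inl hy, hyM⟩ u hum v hvm
      exact ⟨h1.2.symm.trans ((hu1 x hx y hy).trans h2.2),
        h1.1.symm.trans ((hu2 x hx y hy).trans h2.1)⟩
    by_cases hum : u ∈ M <;> by_cases hvm : v ∈ M
    · -- u ∈ M, v ∈ M
      rcases Set.eq_empty_or_nonempty (M ∩ X) with hempty | ⟨a, ha⟩
      · exact (L3 hum hvm hempty).elim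
      · rcases hX.2 (M ∩ X) hMX with hsub | heq
        · exact (L1 a ha hum fun z hz => hsub hz ha).elim
        · -- X ⊆ M, so M = X ∪ {u, v}
          right
          refine Set.Subset.antisymm hM.1 ?_
          intro z hz
          rcases hz with hz | hz
          · exact (heq ▸ (Set.inter_subset_left : M ∩ X ⊆ M)) (heq ▸ hz)
          · rcases hz with hz | hz
            · exact hz ▸ hum
            · exact hz ▸ hvm
    · -- u ∈ M, v ∉ M
      rcases hX.2 (M ∩ X) hMX with hsub | heq
      · rcases Set.eq_empty_or_nonempty (M ∩ X) with hempty | ⟨a, ha⟩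
        · -- M ⊆ {u}
          left
          intro x hx y hy
          have hxu : ∀ z, z ∈ M → z = u := by
            intro z hz
            rcases hM.1 hz with h | h
            · exact absurd (Set.eq_empty_iff_forall_notMem.mp hempty z ⟨hz, h⟩) (fun q => q)
            · rcases h with h | h
              · exact h
              · exact absurd (h ▸ hz) hvm
          rw [hxu x hx, hxu y hy]
        · exact (L1 a ha hum fun z hz => hsub hz ha).elim
      · -- X ⊆ M, v ∉ M : X is a module of D[X ∪ {v}], contradiction
        exfalso
        apply hvM
        have hXM : X ⊆ M := by
          intro z hz
          exact (heq ▸ (Set.inter_subset_left : M ∩ X ⊆ M)) (heq ▸ hz)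
        refine ⟨Set.subset_union_left, ?_⟩
        intro w hw x hx y hy
        have hwv : w = v := by
          rcases hw.1 with h | h
          · exact absurd h hw.2
          · exact h
        rw [hwv]
        exact hM.2 v ⟨hvW, hvm⟩ x (hXM hx) y (hXM hy)
    · -- u ∉ M, v ∈ M
      rcases hX.2 (M ∩ X) hMX with hsub | heq
      · rcases Set.eq_empty_or_nonempty (M ∩ X) with hempty | ⟨a, ha⟩
        · -- M ⊆ {v}
          left
          intro x hx y hy
          have hxv : ∀ z, z ∈ M → z = v := by
            intro z hz
            rcases hM.1 hz with h | h
            · exact absurd (Set.eq_empty_iff_forall_notMem.mp hempty z ⟨hz, h⟩) (fun q => q)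
            · rcases h with h | h
              · exact absurd (h ▸ hz) hum
              · exact h
          rw [hxv x hx, hxv y hy]
        · exact L2 a ha hvm hum |>.elim
      · -- X ⊆ M, u ∉ M: M = X ∪ {v}, contradicting hmod
        exfalso
        apply hmod
        have hXM : X ⊆ M := by
          intro z hz
          exact (heq ▸ (Set.inter_subset_left : M ∩ X ⊆ M)) (heq ▸ hz)
        have hMeq : M = X ∪ {v} := by
          apply Set.Subset.antisymm
          · intro z hz
            rcases hM.1 hz with h | h
            · exact Or.inl h
            · rcases h with h | h
              · exact absurd (h ▸ hz) hum
              · exact Or.inr h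
          · intro z hz
            rcases hz with h | h
            · exact hXM h
            · exact h ▸ hvm
        exact hMeq ▸ hM
    · -- u ∉ M, v ∉ M : M ⊆ X, so M = M ∩ X is subsingleton
      rcases hX.2 (M ∩ X) hMX with hsub | heq
      · left
        intro x hx y hy
        have hMsubX : ∀ z, z ∈ M → z ∈ X := by
          intro z hz
          rcases hM.1 hz with h | h
          · exact h
          · rcases h with h | h
            · exact absurd (h ▸ hz) hum
            · exact absurd (h ▸ hz) hvm
        exact hsub ⟨hx, hMsubX x hx⟩ ⟨hy, hMsubX y hy⟩
      · -- X ⊆ M but v ∉ M : X module of D[X ∪ {v}], contradiction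
        exfalso
        apply hvM
        have hXM : X ⊆ M := by
          intro z hz
          exact (heq ▸ (Set.inter_subset_left : M ∩ X ⊆ M)) (heq ▸ hz)
        refine ⟨Set.subset_union_left, ?_⟩
        intro w hw x hx y hy
        have hwv : w = v := by
          rcases hw.1 with h | h
          · exact absurd h hw.2
          · exact h
        rw [hwv]
        exact hM.2 v ⟨hvW, hvm⟩ x (hXM hx) y (hXM hy)
end

section
/- Let D be a digraph and let X ⊆ V(D) be such that the induced subdigraph D[X] is prime. Let u ∈ X, let x ∈ X_D(u), and let y ∈ (V(D) \ X) \ X_D(u). If {u,x} is not a module of D[X ∪ {x,y}], then D[X ∪ {x,y}] is prime. -/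
variable {V : Type*}

/-!
Let `M` be a module of `D[X ∪ {x, y}]` with at least two vertices. Its trace `M ∩ X` is a module
of the prime digraph `D[X]`, so either `X ⊆ M` or `M ∩ X` has at most one vertex.
If `X ⊆ M`, then `x ∈ M`, for otherwise `u` would, like `x`, not distinguish any two vertices of
`X \ {u}`, making `X \ {u}` a module of `D[X]`; and `y ∈ M`, for otherwise `y` would not
distinguish `u` from `x`. If `M ∩ X` has at most one vertex, a case analysis on which of `x`, `y`,
`u` lie in `M` produces either a module `{u, w}` of `D[X]`, or a proof that `y ∈ X_D(u)`, or a
proof that `{u, x}` is a module of `D[X ∪ {x, y}]`.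
-/

section

variable {D : V → V → Prop}

def SameArcs (D : V → V → Prop) (v a b : V) : Prop :=
  (D v a ↔ D v b) ∧ (D a v ↔ D b v)

def TwinOver (D : V → V → Prop) (X : Set V) (u x : V) : Prop :=
  ∀ v ∈ X, v ≠ u → SameArcs D v u x

theorem SameArcs.refl (v a : V) : SameArcs D v a a :=
  ⟨Iff.rfl, Iff.rfl⟩

theorem SameArcs.symm {v a b : V} (h : SameArcs D v a b) : SameArcs D v b a :=
  ⟨h.1.symm, h.2.symm⟩

theorem SameArcs.trans {v a b c : V} (hab : SameArcs D v a b) (hbc : SameArcs D v b c) :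
    SameArcs D v a c :=
  ⟨hab.1.trans hbc.1, hab.2.trans hbc.2⟩

theorem sameArcs_iff_of_sameArcs {a b u x : V} (ha : SameArcs D a u x) (hb : SameArcs D b u x) :
    SameArcs D u a b ↔ SameArcs D x a b := by
  unfold SameArcs
  rw [ha.2, hb.2, ha.1, hb.1]

theorem DModuleOn.sameArcs {W M : Set V} (hM : DModuleOn D W M) {v a b : V} (hv : v ∈ W)
    (hvM : v ∉ M) (ha : a ∈ M) (hb : b ∈ M) : SameArcs D v a b :=
  hM.2 v ⟨hv, hvM⟩ a ha b hb

theorem DModuleOn.inter {W M Y : Set V} (hM : DModuleOn D W M) (hY : Y ⊆ W) :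
    DModuleOn D Y (M ∩ Y) :=
  ⟨Set.inter_subset_right, fun _ hv _ ha _ hb =>
    hM.sameArcs (hY hv.1) (fun hvM => hv.2 ⟨hvM, hv.1⟩) ha.1 hb.1⟩

theorem dModuleOn_pair_iff {W : Set V} {a b : V} :
    DModuleOn D W {a, b} ↔
      a ∈ W ∧ b ∈ W ∧ ∀ v ∈ W, v ≠ a → v ≠ b → SameArcs D v a b := by
  constructor
  · intro hM
    exact ⟨hM.1 (Or.inl rfl), hM.1 (Or.inr rfl), fun v hv hva hvb =>
      hM.sameArcs hv (by rintro (rfl | rfl) <;> contradiction) (Or.inl rfl) (Or.inr rfl)⟩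
  · rintro ⟨ha, hb, h⟩
    refine ⟨Set.insert_subset ha (Set.singleton_subset_iff.2 hb), ?_⟩
    rintro v ⟨hv, hvab⟩ c (rfl | rfl) d (rfl | rfl)
    all_goals first
      | exact SameArcs.refl _ _
      | exact h v hv (fun h => hvab (Or.inl h)) (fun h => hvab (Or.inr h))
      | exact (h v hv (fun h => hvab (Or.inl h)) (fun h => hvab (Or.inr h))).symm

theorem DPrimeOn.not_dModuleOn_pair {X : Set V} (hX : DPrimeOn D X) {a b : V} (hab : a ≠ b) :
    ¬ DModuleOn D X {a, b} := by
  intro hM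
  rcases hX.2 _ hM with h | h
  · exact hab (h (Or.inl rfl) (Or.inr rfl))
  · have := hX.1
    rw [← h, Set.ncard_pair hab] at this
    omega

theorem DPrimeOn.not_dModuleOn_diff_singleton {X : Set V} (hX : DPrimeOn D X) {u : V}
    (hu : u ∈ X) : ¬ DModuleOn D X (X \ {u}) := by
  intro hM
  rcases hX.2 _ hM with h | h
  · have hcard :=
      Set.ncard_sdiff_singleton_add_one hu (Set.finite_of_ncard_pos (by linarith [hX.1]))
    have : (X \ {u}).ncard ≤ 1 := (Set.ncard_le_one_iff h.finite).2 fun ha hb => h ha hb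
    linarith [hX.1]
  · exact (h.symm ▸ hu : u ∈ X \ {u}).2 rfl

theorem mem_attD_iff {X : Set V} {u v : V} (hu : u ∈ X) :
    v ∈ AttD D X u ↔ v ∉ X ∧ TwinOver D X u v := by
  refine and_congr_right fun hv => ?_
  rw [dModuleOn_pair_iff]
  constructor
  · rintro ⟨-, -, h⟩ w hw hwu
    exact h w (Or.inl hw) hwu (fun h => hv (h ▸ hw))
  · intro h
    refine ⟨Or.inl hu, Or.inr rfl, ?_⟩
    rintro w (hw | rfl) hwu hwv
    exacts [h w hw hwu, absurd rfl hwv]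

theorem dModuleOn_union_pair_iff {X : Set V} {u x y : V} (hu : u ∈ X)
    (hx : TwinOver D X u x) (hyX : y ∉ X) (hxy : x ≠ y) :
    DModuleOn D (X ∪ {x, y}) {u, x} ↔ SameArcs D y u x := by
  rw [dModuleOn_pair_iff]
  constructor
  · rintro ⟨-, -, h⟩
    exact h y (Or.inr (Or.inr rfl)) (fun h => hyX (h ▸ hu)) hxy.symm
  · intro h
    refine ⟨Or.inl hu, Or.inr (Or.inl rfl), ?_⟩
    rintro v (hv | rfl | rfl) hvu hvx
    exacts [hx v hv hvu, absurd rfl hvx, h]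

theorem DModuleOn.eq_union_pair_of_subset {X M : Set V} (hX : DPrimeOn D X) {u x y : V}
    (hu : u ∈ X) (hx : TwinOver D X u x) (hyx : ¬ SameArcs D y u x)
    (hM : DModuleOn D (X ∪ {x, y}) M) (hXM : X ⊆ M) : M = X ∪ {x, y} := by
  have hxM : x ∈ M := by
    by_contra hxM
    refine hX.not_dModuleOn_diff_singleton hu ⟨Set.sdiff_subset, ?_⟩
    rintro v ⟨hvX, hvu⟩ a ⟨haX, hau⟩ b ⟨hbX, hbu⟩
    obtain rfl : v = u := by simpa [hvX] using hvu
    exact (sameArcs_iff_of_sameArcs (hx a haX hau) (hx b hbX hbu)).2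
      (hM.sameArcs (Or.inr (Or.inl rfl)) hxM (hXM haX) (hXM hbX))
  have hyM : y ∈ M := by
    by_contra hyM
    exact hyx (hM.sameArcs (Or.inr (Or.inr rfl)) hyM (hXM hu) hxM)
  refine hM.1.antisymm (Set.union_subset hXM ?_)
  rintro z (rfl | rfl)
  exacts [hxM, hyM]

theorem DModuleOn.subsingleton_of_mem {X M : Set V} (hX : DPrimeOn D X) {u x y : V}
    (hu : u ∈ X) (hx : TwinOver D X u x) (hy : ¬ TwinOver D X u y) (hyx : ¬ SameArcs D y u x)
    (hM : DModuleOn D (X ∪ {x, y}) M) (hMX : (M ∩ X).Subsingleton) (hxM : x ∈ M) :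
    M.Subsingleton := by
  by_cases hw : ∃ w ∈ M ∩ X, w ≠ u
  · obtain ⟨w, ⟨hwM, hwX⟩, hwu⟩ := hw
    refine absurd ?_ (hX.not_dModuleOn_pair hwu.symm)
    refine dModuleOn_pair_iff.2 ⟨hu, hwX, fun v hv hvu hvw => (hx v hv hvu).trans ?_⟩
    exact hM.sameArcs (Or.inl hv) (fun hvM => hvw (hMX ⟨hvM, hv⟩ ⟨hwM, hwX⟩)) hxM hwM
  push Not at hw
  have hout : ∀ v ∈ X, v ≠ u → v ∉ M := fun v hv hvu hvM => hvu (hw v ⟨hvM, hv⟩)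
  by_cases hyM : y ∈ M
  · exact absurd (fun v hv hvu =>
      (hx v hv hvu).trans (hM.sameArcs (Or.inl hv) (hout v hv hvu) hxM hyM)) hy
  by_cases huM : u ∈ M
  · exact absurd (hM.sameArcs (Or.inr (Or.inr rfl)) hyM huM hxM) hyx
  refine (Set.subsingleton_singleton (a := x)).anti fun z hz => ?_
  rcases hM.1 hz with hzX | rfl | rfl
  · exact absurd (hw z ⟨hz, hzX⟩ ▸ hz) huM
  · rfl
  · exact absurd hz hyM

theorem DModuleOn.subsingleton_of_notMem {X M : Set V} {u x y : V}
    (hu : u ∈ X) (hx : TwinOver D X u x) (hy : ¬ TwinOver D X u y) (hyx : ¬ SameArcs D y u x)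
    (hM : DModuleOn D (X ∪ {x, y}) M) (hMX : (M ∩ X).Subsingleton) (hxM : x ∉ M) :
    M.Subsingleton := by
  have hsub : M ⊆ insert y (M ∩ X) := by
    intro z hz
    rcases hM.1 hz with hzX | rfl | rfl
    exacts [Or.inr ⟨hz, hzX⟩, absurd hz hxM, Or.inl rfl]
  by_cases hyM : y ∈ M
  swap
  · exact hMX.anti fun z hz => (hsub hz).resolve_left (ne_of_mem_of_not_mem hz hyM)
  rcases (M ∩ X).eq_empty_or_nonempty with h | ⟨w, hwM, hwX⟩
  · rw [h, insert_empty_eq] at hsub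
    exact Set.subsingleton_singleton.anti hsub
  exfalso
  by_cases hwu : w = u
  · subst hwu
    exact hy fun v hv hvw =>
      hM.sameArcs (Or.inl hv) (fun hvM => hvw (hMX ⟨hvM, hv⟩ ⟨hwM, hwX⟩)) hwM hyM
  have huM : u ∉ M := fun h => hwu (hMX ⟨hwM, hwX⟩ ⟨h, hu⟩)
  exact hyx ((sameArcs_iff_of_sameArcs (hM.sameArcs (Or.inl hu) huM hwM hyM)
    (hM.sameArcs (Or.inr (Or.inl rfl)) hxM hwM hyM)).1 (hx w hwX hwu))

end

theorem prime_extension_att_general (D : V → V → Prop)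
    (X : Set V) (hX : DPrimeOn D X)
    (u : V) (hu : u ∈ X)
    (x : V) (hx : x ∈ AttD D X u)
    (y : V) (hy : y ∈ Xᶜ \ AttD D X u)
    (hmod : ¬ DModuleOn D (X ∪ {x, y}) ({u, x} : Set V)) :
    DPrimeOn D (X ∪ {x, y}) := by
  have hxu : TwinOver D X u x := ((mem_attD_iff hu).1 hx).2
  have hyu : ¬ TwinOver D X u y := fun h => hy.2 ((mem_attD_iff hu).2 ⟨hy.1, h⟩)
  have hxy : x ≠ y := by
    rintro rfl
    exact hy.2 hx
  have hyx : ¬ SameArcs D y u x := by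
    rwa [dModuleOn_union_pair_iff hu hxu hy.1 hxy] at hmod
  have hXfin : X.Finite := Set.finite_of_ncard_pos (by linarith [hX.1])
  refine ⟨hX.1.trans (Set.ncard_le_ncard Set.subset_union_left (hXfin.union (Set.toFinite _))),
    fun M hM => ?_⟩
  rcases hX.2 (M ∩ X) (hM.inter Set.subset_union_left) with hMX | hMX
  · left
    by_cases hxM : x ∈ M
    · exact hM.subsingleton_of_mem hX hu hxu hyu hyx hMX hxM
    · exact hM.subsingleton_of_notMem hu hxu hyu hyx hMX hxM
  · exact Or.inr (hM.eq_union_pair_of_subset hX hu hxu hyx (Set.inter_eq_right.1 hMX))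

/-- Lemma (ER, 6.3/6.4, assertion 2): if `u ∈ X`, `x ∈ X_D(u)`, `y ∉ X ∪ X_D(u)`,
and `{u, x}` is not a module of `D[X ∪ {x, y}]`, then `D[X ∪ {x, y}]` is prime. -/
theorem prime_extension_att [Fintype V] (D : V → V → Prop)
    (X : Set V) (hX : DPrimeOn D X)
    (u : V) (hu : u ∈ X)
    (x : V) (hx : x ∈ AttD D X u)
    (y : V) (hy : y ∈ Xᶜ \ AttD D X u)
    (hmod : ¬ DModuleOn D (X ∪ {x, y}) ({u, x} : Set V)) :
    DPrimeOn D (X ∪ {x, y}) :=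
  prime_extension_att_general D X hX u hu x hx y hy hmod
end
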